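/- arXiv:1608.04301 — 7 statements merged into one kernel-verified Lean document; each statement's English description precedes it below -/
import Mathlib

section
/- Union closure of propositional inclusion logic: if teams X and Y (over a common domain containing the free variables of φ) both satisfy a propositional inclusion logic formula φ, then X ∪ Y satisfies φ. -/
/-- Propositional inclusion logic (NNF with inclusion atoms). -/
inductive PIncForm : Type
  | pos : ℕ → PIncForm
  | neg : ℕ → PIncForm
  | inc : List ℕ → List ℕ → PIncForm
  | conj : PIncForm → PIncForm → PIncForm
  | disj : PIncForm → PIncForm → PIncForm

/-- Team semantics for propositional inclusion logic. -/
def PIncSat : Set (ℕ → Bool) → PIncForm → Prop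
  | X, .pos p => ∀ s ∈ X, s p = true
  | X, .neg p => ∀ s ∈ X, s p = false
  | X, .inc ps qs => ∀ s ∈ X, ∃ s' ∈ X, ps.map s = qs.map s'
  | X, .conj φ ψ => PIncSat X φ ∧ PIncSat X ψ
  | X, .disj φ ψ => ∃ Y Z, Y ∪ Z = X ∧ PIncSat Y φ ∧ PIncSat Z ψ

/-- Union closure of propositional inclusion logic. -/
theorem pinc_union_closure (X Y : Set (ℕ → Bool)) (φ : PIncForm)
    (hX : PIncSat X φ) (hY : PIncSat Y φ) : PIncSat (X ∪ Y) φ := by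
  induction φ generalizing X Y with
  | pos p =>
    rintro s (h | h)
    · exact hX s h
    · exact hY s h
  | neg p =>
    rintro s (h | h)
    · exact hX s h
    · exact hY s h
  | inc ps qs =>
    rintro s (h | h)
    · obtain ⟨s', hs', he⟩ := hX s h
      exact ⟨s', Or.inl hs', he⟩
    · obtain ⟨s', hs', he⟩ := hY s h
      exact ⟨s', Or.inr hs', he⟩
  | conj φ ψ ihφ ihψ =>
    exact ⟨ihφ _ _ hX.1 hY.1, ihψ _ _ hX.2 hY.2⟩
  | disj φ ψ ihφ ihψ =>
    obtain ⟨A, B, hAB, hA, hB⟩ := hX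
    obtain ⟨C, D, hCD, hC, hD⟩ := hY
    refine ⟨A ∪ C, B ∪ D, ?_, ihφ _ _ hA hC, ihψ _ _ hB hD⟩
    rw [← hAB, ← hCD]
    ext x; simp [Set.mem_union]; tauto
end

section
/- Disjunction splitting for intuitionistic disjunction over flat premises: if Σ is a set of ML formulae and φ₀, φ₁ are ML(⋁) formulae, then Σ ⊨ φ₀ ⋁ φ₁ (in team semantics over all Kripke models and teams) if and only if Σ ⊨ φ₀ or Σ ⊨ φ₁. -/
/-- Kripke models. -/
structure Kripke where
  W : Type
  R : W → W → Prop
  π : ℕ → Set W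

/-- Image team `R[T]`. -/
def img (M : Kripke) (T : Set M.W) : Set M.W := {w | ∃ w' ∈ T, M.R w' w}

/-- Modal logic with intuitionistic disjunction `⋁` (NNF). -/
inductive MLiForm : Type
  | pos : ℕ → MLiForm
  | neg : ℕ → MLiForm
  | conj : MLiForm → MLiForm → MLiForm
  | disj : MLiForm → MLiForm → MLiForm
  | ivee : MLiForm → MLiForm → MLiForm
  | dia : MLiForm → MLiForm
  | box : MLiForm → MLiForm

/-- `φ` is a plain ML formula (no intuitionistic disjunction). -/
def noIvee : MLiForm → Prop
  | .pos _ => True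
  | .neg _ => True
  | .conj φ ψ => noIvee φ ∧ noIvee ψ
  | .disj φ ψ => noIvee φ ∧ noIvee ψ
  | .ivee _ _ => False
  | .dia φ => noIvee φ
  | .box φ => noIvee φ

/-- Team semantics for ML(⋁). -/
def MLiSat (M : Kripke) : Set M.W → MLiForm → Prop
  | T, .pos p => T ⊆ M.π p
  | T, .neg p => T ∩ M.π p = ∅
  | T, .conj φ ψ => MLiSat M T φ ∧ MLiSat M T ψ
  | T, .disj φ ψ => ∃ T₁ T₂, T₁ ∪ T₂ = T ∧ MLiSat M T₁ φ ∧ MLiSat M T₂ ψ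
  | T, .ivee φ ψ => MLiSat M T φ ∨ MLiSat M T ψ
  | T, .dia φ => ∃ T', T' ⊆ img M T ∧ (∀ w ∈ T, ∃ w' ∈ T', M.R w w') ∧ MLiSat M T' φ
  | T, .box φ => MLiSat M (img M T) φ

/-- Entailment over all Kripke models and teams. -/
def entails (Sig : Set MLiForm) (φ : MLiForm) : Prop :=
  ∀ (M : Kripke) (T : Set M.W), (∀ σ ∈ Sig, MLiSat M T σ) → MLiSat M T φ

lemma img_mono (M : Kripke) {S T : Set M.W} (h : S ⊆ T) : img M S ⊆ img M T := by
  rintro w ⟨w', hw', hR⟩; exact ⟨w', h hw', hR⟩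

lemma sat_mono (M : Kripke) (φ : MLiForm) :
    ∀ T S : Set M.W, S ⊆ T → MLiSat M T φ → MLiSat M S φ := by
  induction φ with
  | pos p => intro T S h hT; exact fun w hw => hT (h hw)
  | neg p => intro T S h hT
             simp only [MLiSat] at *
             exact Set.eq_empty_of_subset_empty (hT ▸ Set.inter_subset_inter_left _ h)
  | conj φ ψ ihφ ihψ => rintro T S h ⟨h1, h2⟩; exact ⟨ihφ T S h h1, ihψ T S h h2⟩
  | disj φ ψ ihφ ihψ =>
      rintro T S h ⟨T₁, T₂, hu, h1, h2⟩
      refine ⟨T₁ ∩ S, T₂ ∩ S, ?_, ihφ T₁ _ Set.inter_subset_left h1,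
        ihψ T₂ _ Set.inter_subset_left h2⟩
      rw [← Set.union_inter_distrib_right, hu]
      exact Set.inter_eq_right.mpr h
  | ivee φ ψ ihφ ihψ =>
      rintro T S h (h1 | h2)
      · exact Or.inl (ihφ T S h h1)
      · exact Or.inr (ihψ T S h h2)
  | dia φ ih =>
      rintro T S h ⟨T', hsub, hsucc, hφ⟩
      refine ⟨{w' ∈ T' | ∃ w ∈ S, M.R w w'}, ?_, ?_, ih T' _ (fun _ h => h.1) hφ⟩
      · rintro w' ⟨-, w, hw, hR⟩; exact ⟨w, hw, hR⟩
      · intro w hw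
        obtain ⟨w', hw', hR⟩ := hsucc w (h hw)
        exact ⟨w', ⟨hw', w, hw, hR⟩, hR⟩
  | box φ ih =>
      intro T S h hT
      exact ih _ _ (img_mono M h) hT

lemma sat_flat_union (M : Kripke) (φ : MLiForm) (hφ : noIvee φ) :
    ∀ T : Set M.W, (∀ w ∈ T, MLiSat M {w} φ) → MLiSat M T φ := by
  induction φ with
  | pos p => intro T h w hw; exact h w hw rfl
  | neg p =>
      intro T h
      simp only [MLiSat] at *
      ext w; simp only [Set.mem_inter_iff, Set.mem_empty_iff_false, iff_false, not_and]
      intro hw hπ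
      have := h w hw
      rw [Set.eq_empty_iff_forall_notMem] at this
      exact this w ⟨rfl, hπ⟩
  | conj φ ψ ihφ ihψ =>
      intro T h
      exact ⟨ihφ hφ.1 T (fun w hw => (h w hw).1), ihψ hφ.2 T (fun w hw => (h w hw).2)⟩
  | disj φ ψ ihφ ihψ =>
      intro T h
      refine ⟨{w ∈ T | MLiSat M {w} φ}, {w ∈ T | MLiSat M {w} ψ}, ?_, ?_, ?_⟩
      · ext w
        simp only [Set.mem_union, Set.mem_setOf_eq]
        constructor
        · rintro (⟨hw, -⟩ | ⟨hw, -⟩) <;> exact hw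
        · intro hw
          obtain ⟨T₁, T₂, hu, h1, h2⟩ := h w hw
          rcases (hu ▸ rfl : w ∈ T₁ ∪ T₂) with h' | h'
          · exact Or.inl ⟨hw, sat_mono M φ T₁ {w} (Set.singleton_subset_iff.mpr h') h1⟩
          · exact Or.inr ⟨hw, sat_mono M ψ T₂ {w} (Set.singleton_subset_iff.mpr h') h2⟩
      · exact ihφ hφ.1 _ (fun w hw => hw.2)
      · exact ihψ hφ.2 _ (fun w hw => hw.2)
  | ivee φ ψ ihφ ihψ => exact absurd hφ (by simp [noIvee])
  | dia φ ih =>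
      intro T h
      refine ⟨{w' ∈ img M T | MLiSat M {w'} φ}, Set.sep_subset _ _, ?_, ?_⟩
      · intro w hw
        obtain ⟨T', hsub, hsucc, hψ⟩ := h w hw
        obtain ⟨w', hw', hR⟩ := hsucc w rfl
        refine ⟨w', ⟨⟨w, hw, hR⟩, sat_mono M φ T' {w'} (Set.singleton_subset_iff.mpr hw') hψ⟩, hR⟩
      · exact ih hφ _ (fun w hw => hw.2)
  | box φ ih =>
      intro T h
      refine ih hφ _ ?_
      rintro v ⟨w, hw, hR⟩
      have := h w hw
      exact sat_mono M φ _ {v} (show {v} ⊆ img M {w} from Set.singleton_subset_iff.mpr ⟨w, rfl, hR⟩) this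

lemma sat_embed (M₀ M : Kripke) (f : M₀.W → M.W) (hinj : Function.Injective f)
    (hπ : ∀ p a, f a ∈ M.π p ↔ a ∈ M₀.π p)
    (hR : ∀ a b, M.R (f a) (f b) ↔ M₀.R a b)
    (hcl : ∀ a w, M.R (f a) w → ∃ b, w = f b) (φ : MLiForm) :
    ∀ T : Set M₀.W, MLiSat M (f '' T) φ ↔ MLiSat M₀ T φ := by
  have himg : ∀ T : Set M₀.W, img M (f '' T) = f '' img M₀ T := by
    intro T
    ext w
    constructor
    · rintro ⟨w', ⟨a, ha, rfl⟩, hRw⟩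
      obtain ⟨b, rfl⟩ := hcl a w hRw
      exact ⟨b, ⟨a, ha, (hR a b).mp hRw⟩, rfl⟩
    · rintro ⟨b, ⟨a, ha, hab⟩, rfl⟩
      exact ⟨f a, ⟨a, ha, rfl⟩, (hR a b).mpr hab⟩
  induction φ with
  | pos p =>
      intro T
      simp only [MLiSat]
      constructor
      · intro h a ha; exact (hπ p a).mp (h ⟨a, ha, rfl⟩)
      · rintro h w ⟨a, ha, rfl⟩; exact (hπ p a).mpr (h ha)
  | neg p =>
      intro T
      simp only [MLiSat, Set.eq_empty_iff_forall_notMem]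
      constructor
      · rintro h a ⟨ha, hπa⟩; exact h (f a) ⟨⟨a, ha, rfl⟩, (hπ p a).mpr hπa⟩
      · rintro h w ⟨⟨a, ha, rfl⟩, hπa⟩; exact h a ⟨ha, (hπ p a).mp hπa⟩
  | conj φ ψ ihφ ihψ =>
      intro T; simp only [MLiSat]; rw [ihφ T, ihψ T]
  | disj φ ψ ihφ ihψ =>
      intro T
      constructor
      · rintro ⟨T₁, T₂, hu, h1, h2⟩
        have hsub₁ : T₁ ⊆ f '' T := hu ▸ Set.subset_union_left
        have hsub₂ : T₂ ⊆ f '' T := hu ▸ Set.subset_union_right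
        have e₁ : f '' (f ⁻¹' T₁) = T₁ :=
          Set.image_preimage_eq_of_subset (hsub₁.trans (Set.image_subset_range f T))
        have e₂ : f '' (f ⁻¹' T₂) = T₂ :=
          Set.image_preimage_eq_of_subset (hsub₂.trans (Set.image_subset_range f T))
        refine ⟨f ⁻¹' T₁, f ⁻¹' T₂, ?_, (ihφ _).mp (by rw [e₁]; exact h1), (ihψ _).mp (by rw [e₂]; exact h2)⟩
        apply hinj.image_injective
        rw [Set.image_union, e₁, e₂, hu]
      · rintro ⟨T₁, T₂, hu, h1, h2⟩
        exact ⟨f '' T₁, f '' T₂, by rw [← Set.image_union, hu],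
          (ihφ _).mpr h1, (ihψ _).mpr h2⟩
  | ivee φ ψ ihφ ihψ =>
      intro T; simp only [MLiSat]; rw [ihφ T, ihψ T]
  | dia φ ih =>
      intro T
      constructor
      · rintro ⟨T', hsub, hsucc, hψ⟩
        rw [himg T] at hsub
        have e : f '' (f ⁻¹' T') = T' :=
          Set.image_preimage_eq_of_subset (hsub.trans (Set.image_subset_range f _))
        refine ⟨f ⁻¹' T', ?_, ?_, (ih _).mp (by rw [e]; exact hψ)⟩
        · intro a ha
          obtain ⟨b, hb, hfb⟩ := hsub ha
          rwa [← hinj hfb]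
        · intro w hw
          obtain ⟨w', hw', hRw⟩ := hsucc (f w) ⟨w, hw, rfl⟩
          obtain ⟨b, rfl⟩ := hcl w _ hRw
          exact ⟨b, hw', (hR w b).mp hRw⟩
      · rintro ⟨T', hsub, hsucc, hψ⟩
        refine ⟨f '' T', by rw [himg T]; exact Set.image_mono hsub, ?_, (ih _).mpr hψ⟩
        rintro w ⟨a, ha, rfl⟩
        obtain ⟨b, hb, hab⟩ := hsucc a ha
        exact ⟨f b, ⟨b, hb, rfl⟩, (hR a b).mpr hab⟩
  | box φ ih =>
      intro T
      show MLiSat M (img M (f '' T)) φ ↔ MLiSat M₀ (img M₀ T) φ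
      rw [himg T, ih]

def dsum (M₀ M₁ : Kripke) : Kripke where
  W := M₀.W ⊕ M₁.W
  R := fun a b => match a, b with
    | .inl a, .inl b => M₀.R a b
    | .inr a, .inr b => M₁.R a b
    | _, _ => False
  π := fun p => Sum.inl '' M₀.π p ∪ Sum.inr '' M₁.π p

lemma sat_inl (M₀ M₁ : Kripke) (φ : MLiForm) (T : Set M₀.W) :
    MLiSat (dsum M₀ M₁) (Sum.inl '' T) φ ↔ MLiSat M₀ T φ := by
  apply sat_embed _ _ _ Sum.inl_injective
  · intro p a
    constructor
    · rintro (⟨b, hb, h⟩ | ⟨b, hb, h⟩)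
      · rwa [← Sum.inl_injective h]
      · exact absurd h (by simp)
    · intro h; exact Or.inl ⟨a, h, rfl⟩
  · intro a b; rfl
  · rintro a (b | b) h
    · exact ⟨b, rfl⟩
    · exact absurd h (by simp [dsum])

lemma sat_inr (M₀ M₁ : Kripke) (φ : MLiForm) (T : Set M₁.W) :
    MLiSat (dsum M₀ M₁) (Sum.inr '' T) φ ↔ MLiSat M₁ T φ := by
  apply sat_embed _ _ _ Sum.inr_injective
  · intro p a
    constructor
    · rintro (⟨b, hb, h⟩ | ⟨b, hb, h⟩)
      · exact absurd h (by simp)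
      · rwa [← Sum.inr_injective h]
    · intro h; exact Or.inr ⟨a, h, rfl⟩
  · intro a b; rfl
  · rintro a (b | b) h
    · exact absurd h (by simp [dsum])
    · exact ⟨b, rfl⟩


/-- Disjunction splitting for intuitionistic disjunction over flat premises. -/
theorem entails_ivee_iff (Sig : Set MLiForm) (hSig : ∀ σ ∈ Sig, noIvee σ)
    (φ₀ φ₁ : MLiForm) :
    entails Sig (.ivee φ₀ φ₁) ↔ entails Sig φ₀ ∨ entails Sig φ₁ := by
  constructor
  · intro h
    by_contra hc
    push_neg at hc
    obtain ⟨h0, h1⟩ := hc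
    simp only [entails, not_forall] at h0 h1
    obtain ⟨M₀, T₀, hS0, hn₀⟩ := h0
    obtain ⟨M₁, T₁, hS1, hn₁⟩ := h1
    set M := dsum M₀ M₁ with hM
    set T : Set M.W := Sum.inl '' T₀ ∪ Sum.inr '' T₁ with hT
    have hSAll : ∀ σ ∈ Sig, MLiSat M T σ := by
      intro σ hσ
      apply sat_flat_union M σ (hSig σ hσ)
      rintro w (⟨a, ha, rfl⟩ | ⟨a, ha, rfl⟩)
      · exact sat_mono M σ _ _
          (show ({Sum.inl a} : Set M.W) ⊆ Sum.inl '' T₀ from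
            Set.singleton_subset_iff.mpr ⟨a, ha, rfl⟩)
          ((sat_inl M₀ M₁ σ T₀).mpr (hS0 σ hσ))
      · exact sat_mono M σ _ _
          (show ({Sum.inr a} : Set M.W) ⊆ Sum.inr '' T₁ from
            Set.singleton_subset_iff.mpr ⟨a, ha, rfl⟩)
          ((sat_inr M₀ M₁ σ T₁).mpr (hS1 σ hσ))
    rcases h M T hSAll with h' | h'
    · exact hn₀ ((sat_inl M₀ M₁ φ₀ T₀).mp
        (sat_mono M φ₀ T _ Set.subset_union_left h'))
    · exact hn₁ ((sat_inr M₀ M₁ φ₁ T₁).mp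
        (sat_mono M φ₁ T _ Set.subset_union_right h'))
  · rintro (h | h) M T hT
    · exact Or.inl (h M T hT)
    · exact Or.inr (h M T hT)
end

section
/- Representation of a dependence atom by intuitionistic disjunction: the extended dependence atom =(α₁,…,αₙ,β) (with αᵢ, β ML formulae) is equivalent, under team semantics, to the intuitionistic disjunction over all functions f : {⊤,⊥}ⁿ → {⊤,⊥} of the ML formula D(f) = ⋁_{a₁,…,aₙ ∈ {⊤,⊥}} (α₁^{a₁} ∧ … ∧ αₙ^{aₙ} ∧ β^{f(a₁,…,aₙ)}), where ψ^⊤ = ψ and ψ^⊥ is the NNF negation of ψ, and the big ∨ is the splitting disjunction of team semantics. -/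
/-- Modal logic in negation normal form. -/
inductive MLForm : Type
  | pos : ℕ → MLForm
  | neg : ℕ → MLForm
  | conj : MLForm → MLForm → MLForm
  | disj : MLForm → MLForm → MLForm
  | dia : MLForm → MLForm
  | box : MLForm → MLForm

/-- Team semantics for modal logic. -/
def MLsat (M : Kripke) : Set M.W → MLForm → Prop
  | T, .pos p => T ⊆ M.π p
  | T, .neg p => T ∩ M.π p = ∅
  | T, .conj φ ψ => MLsat M T φ ∧ MLsat M T ψ
  | T, .disj φ ψ => ∃ T₁ T₂, T₁ ∪ T₂ = T ∧ MLsat M T₁ φ ∧ MLsat M T₂ ψ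
  | T, .dia φ => ∃ T', T' ⊆ img M T ∧ (∀ w ∈ T, ∃ w' ∈ T', M.R w w') ∧ MLsat M T' φ
  | T, .box φ => MLsat M (img M T) φ

/-- NNF negation of an ML formula. -/
def mlneg : MLForm → MLForm
  | .pos p => .neg p
  | .neg p => .pos p
  | .conj φ ψ => .disj (mlneg φ) (mlneg ψ)
  | .disj φ ψ => .conj (mlneg φ) (mlneg ψ)
  | .dia φ => .box (mlneg φ)
  | .box φ => .dia (mlneg φ)

/-- `ψ^⊤ = ψ` and `ψ^⊥` is the NNF negation of `ψ`. -/
def signed (ψ : MLForm) (b : Bool) : MLForm := if b then ψ else mlneg ψ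

/-- A formula satisfied only by the empty team. -/
def mlBot : MLForm := .conj (.pos 0) (.neg 0)

/-- Big splitting disjunction of a list of formulae. -/
def bigDisj : List MLForm → MLForm := fun l => l.foldr .disj mlBot

/-- A valid formula. -/
def mlTop : MLForm := .disj (.pos 0) (.neg 0)

/-- Big conjunction of a list of formulae. -/
def bigConj : List MLForm → MLForm := fun l => l.foldr .conj mlTop

/-- All tuples over `{⊤,⊥}` of a given length. -/
def tuples : ℕ → List (List Bool)
  | 0 => [[]]
  | n + 1 => (tuples n).flatMap fun l => [true :: l, false :: l]

/-- The witnessing ML formula `D(f)` for a witness `f` of `=(α⃗,β)`. -/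
def Dform (f : List Bool → Bool) (αs : List MLForm) (β : MLForm) : MLForm :=
  bigDisj ((tuples αs.length).map fun a =>
    bigConj (List.zipWith signed αs a ++ [signed β (f a)]))

/-- Team semantics of the extended dependence atom `=(α⃗,β)`. -/
def edepSat (M : Kripke) (T : Set M.W) (αs : List MLForm) (β : MLForm) : Prop :=
  ∀ w ∈ T, ∀ w' ∈ T,
    (∀ α ∈ αs, (MLsat M {w} α ↔ MLsat M {w'} α)) →
    (MLsat M {w} β ↔ MLsat M {w'} β)

section Aux

open Classical

lemma img_empty (M : Kripke) : img M ∅ = ∅ := by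
  simp [img]

lemma img_singleton (M : Kripke) (w : M.W) : img M {w} = {v | M.R w v} := by
  simp [img]

lemma mlsat_empty (M : Kripke) (φ : MLForm) : MLsat M ∅ φ := by
  induction φ with
  | pos p => simp [MLsat]
  | neg p => simp [MLsat]
  | conj φ ψ ih1 ih2 => exact ⟨ih1, ih2⟩
  | disj φ ψ ih1 ih2 => exact ⟨∅, ∅, by simp, ih1, ih2⟩
  | dia φ ih => exact ⟨∅, by simp, by simp, ih⟩
  | box φ ih => show MLsat M (img M ∅) φ; rwa [img_empty]

lemma mlsat_flat (M : Kripke) (φ : MLForm) :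
    ∀ T, MLsat M T φ ↔ ∀ w ∈ T, MLsat M {w} φ := by
  induction φ with
  | pos p =>
    intro T
    simp [MLsat, Set.subset_def]
  | neg p =>
    intro T
    simp [MLsat, Set.eq_empty_iff_forall_notMem]
  | conj φ ψ ih1 ih2 =>
    intro T
    show (MLsat M T φ ∧ MLsat M T ψ) ↔ _
    rw [ih1, ih2]
    constructor
    · rintro ⟨h1, h2⟩ w hw; exact ⟨h1 w hw, h2 w hw⟩
    · intro h; exact ⟨fun w hw => (h w hw).1, fun w hw => (h w hw).2⟩
  | disj φ ψ ih1 ih2 =>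
    intro T
    constructor
    · rintro ⟨T₁, T₂, rfl, h1, h2⟩ w hw
      rcases hw with hw | hw
      · exact ⟨{w}, ∅, by simp, (ih1 T₁).mp h1 w hw, mlsat_empty M ψ⟩
      · exact ⟨∅, {w}, by simp, mlsat_empty M φ, (ih2 T₂).mp h2 w hw⟩
    · intro h
      refine ⟨{w ∈ T | MLsat M {w} φ}, {w ∈ T | MLsat M {w} ψ}, ?_, ?_, ?_⟩
      · apply Set.Subset.antisymm
        · rintro w (⟨hw, _⟩ | ⟨hw, _⟩) <;> exact hw
        · intro w hw
          obtain ⟨T₁, T₂, hu, h1, h2⟩ := h w hw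
          have : w ∈ T₁ ∪ T₂ := hu ▸ rfl
          rcases this with hw1 | hw1
          · exact Or.inl ⟨hw, (ih1 T₁).mp h1 w hw1⟩
          · exact Or.inr ⟨hw, (ih2 T₂).mp h2 w hw1⟩
      · exact (ih1 _).mpr fun w hw => hw.2
      · exact (ih2 _).mpr fun w hw => hw.2
  | dia φ ih =>
    intro T
    constructor
    · rintro ⟨T', hsub, hsucc, hφ⟩ w hw
      obtain ⟨w', hw', hR⟩ := hsucc w hw
      refine ⟨{w'}, ?_, ?_, (ih T').mp hφ w' hw'⟩
      · intro v hv; rcases hv with rfl; exact ⟨w, rfl, hR⟩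
      · rintro v rfl; exact ⟨w', rfl, hR⟩
    · intro h
      have key : ∀ w, w ∈ T → ∃ v, M.R w v ∧ MLsat M {v} φ := by
        intro w hw
        obtain ⟨T', hsub, hsucc, hφ⟩ := h w hw
        obtain ⟨v, hv, hR⟩ := hsucc w rfl
        exact ⟨v, hR, (ih T').mp hφ v hv⟩
      choose g hg1 hg2 using key
      refine ⟨{v | ∃ w, ∃ h : w ∈ T, g w h = v}, ?_, ?_, ?_⟩
      · rintro v ⟨w, hw, rfl⟩; exact ⟨w, hw, hg1 w hw⟩
      · intro w hw; exact ⟨g w hw, ⟨w, hw, rfl⟩, hg1 w hw⟩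
      · refine (ih _).mpr ?_
        rintro v ⟨w, hw, rfl⟩; exact hg2 w hw
  | box φ ih =>
    intro T
    show MLsat M (img M T) φ ↔ _
    rw [ih]
    constructor
    · intro h w hw
      show MLsat M (img M {w}) φ
      rw [ih]
      rintro v hv
      rw [img_singleton] at hv
      exact h v ⟨w, hw, hv⟩
    · rintro h v ⟨w, hw, hR⟩
      have := h w hw
      rw [show MLsat M {w} (.box φ) = MLsat M (img M {w}) φ from rfl, ih] at this
      exact this v (by rw [img_singleton]; exact hR)

lemma sat_disj_singleton (M : Kripke) (w : M.W) (φ ψ : MLForm) :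
    MLsat M {w} (.disj φ ψ) ↔ MLsat M {w} φ ∨ MLsat M {w} ψ := by
  constructor
  · rintro ⟨T₁, T₂, hu, h1, h2⟩
    have : w ∈ T₁ ∪ T₂ := hu ▸ rfl
    rcases this with hw | hw
    · exact Or.inl ((mlsat_flat M φ T₁).mp h1 w hw)
    · exact Or.inr ((mlsat_flat M ψ T₂).mp h2 w hw)
  · rintro (h | h)
    · exact ⟨{w}, ∅, by simp, h, mlsat_empty M ψ⟩
    · exact ⟨∅, {w}, by simp, mlsat_empty M φ, h⟩

lemma sat_dia_singleton (M : Kripke) (w : M.W) (φ : MLForm) :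
    MLsat M {w} (.dia φ) ↔ ∃ v, M.R w v ∧ MLsat M {v} φ := by
  constructor
  · rintro ⟨T', hsub, hsucc, hφ⟩
    obtain ⟨v, hv, hR⟩ := hsucc w rfl
    exact ⟨v, hR, (mlsat_flat M φ T').mp hφ v hv⟩
  · rintro ⟨v, hR, hφ⟩
    refine ⟨{v}, ?_, ?_, hφ⟩
    · rintro u rfl; exact ⟨w, rfl, hR⟩
    · rintro u rfl; exact ⟨v, rfl, hR⟩

lemma sat_box_singleton (M : Kripke) (w : M.W) (φ : MLForm) :
    MLsat M {w} (.box φ) ↔ ∀ v, M.R w v → MLsat M {v} φ := by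
  show MLsat M (img M {w}) φ ↔ _
  rw [mlsat_flat, img_singleton]
  exact ⟨fun h v hv => h v hv, fun h v hv => h v hv⟩

lemma sat_mlneg (M : Kripke) (φ : MLForm) :
    ∀ w, MLsat M {w} (mlneg φ) ↔ ¬ MLsat M {w} φ := by
  induction φ with
  | pos p =>
    intro w
    simp [mlneg, MLsat, Set.singleton_inter_eq_empty, Set.singleton_subset_iff]
  | neg p =>
    intro w
    simp [mlneg, MLsat, Set.singleton_inter_eq_empty, Set.singleton_subset_iff]
  | conj φ ψ ih1 ih2 =>
    intro w
    show MLsat M {w} (.disj (mlneg φ) (mlneg ψ)) ↔ ¬ (MLsat M {w} φ ∧ MLsat M {w} ψ)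
    rw [sat_disj_singleton, ih1, ih2]
    tauto
  | disj φ ψ ih1 ih2 =>
    intro w
    show (MLsat M {w} (mlneg φ) ∧ MLsat M {w} (mlneg ψ)) ↔ _
    rw [ih1, ih2, sat_disj_singleton]
    tauto
  | dia φ ih =>
    intro w
    show MLsat M {w} (.box (mlneg φ)) ↔ _
    rw [sat_box_singleton, sat_dia_singleton]
    push_neg
    exact forall_congr' fun v => imp_congr Iff.rfl (ih v)
  | box φ ih =>
    intro w
    show MLsat M {w} (.dia (mlneg φ)) ↔ _
    rw [sat_dia_singleton, sat_box_singleton]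
    push_neg
    exact exists_congr fun v => and_congr Iff.rfl (ih v)

lemma sat_signed (M : Kripke) (w : M.W) (ψ : MLForm) (b : Bool) :
    MLsat M {w} (signed ψ b) ↔ (MLsat M {w} ψ ↔ b = true) := by
  cases b <;> simp [signed, sat_mlneg]

lemma sat_mlTop (M : Kripke) (w : M.W) : MLsat M {w} mlTop := by
  rw [mlTop, sat_disj_singleton]
  by_cases h : w ∈ M.π 0
  · exact Or.inl (by simpa [MLsat] using h)
  · exact Or.inr (by simp [MLsat, Set.singleton_inter_eq_empty, h])

lemma sat_mlBot (M : Kripke) (w : M.W) : ¬ MLsat M {w} mlBot := by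
  rintro ⟨h1, h2⟩
  have hw : w ∈ M.π 0 := h1 rfl
  have h2' : ({w} : Set M.W) ∩ M.π 0 = ∅ := h2
  rw [Set.singleton_inter_eq_empty] at h2'
  exact h2' hw

lemma sat_bigConj (M : Kripke) (w : M.W) (l : List MLForm) :
    MLsat M {w} (bigConj l) ↔ ∀ φ ∈ l, MLsat M {w} φ := by
  induction l with
  | nil => simpa [bigConj] using sat_mlTop M w
  | cons φ l ih =>
    show (MLsat M {w} φ ∧ MLsat M {w} (bigConj l)) ↔ _
    rw [ih, List.forall_mem_cons]

lemma sat_bigDisj (M : Kripke) (w : M.W) (l : List MLForm) :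
    MLsat M {w} (bigDisj l) ↔ ∃ φ ∈ l, MLsat M {w} φ := by
  induction l with
  | nil => simpa [bigDisj] using sat_mlBot M w
  | cons φ l ih =>
    show MLsat M {w} (.disj φ (bigDisj l)) ↔ _
    rw [sat_disj_singleton, ih]
    simp

lemma mem_tuples_self : ∀ l : List Bool, l ∈ tuples l.length := by
  intro l
  induction l with
  | nil => simp [tuples]
  | cons b l ih =>
    show b :: l ∈ tuples (l.length + 1)
    rw [tuples]
    refine List.mem_flatMap.mpr ⟨l, ih, ?_⟩
    cases b <;> simp

lemma length_of_mem_tuples : ∀ n, ∀ a ∈ tuples n, a.length = n := by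
  intro n
  induction n with
  | zero => intro a ha; simp [tuples] at ha; simp [ha]
  | succ n ih =>
    intro a ha
    rw [tuples] at ha
    obtain ⟨l, hl, hm⟩ := List.mem_flatMap.mp ha
    simp only [List.mem_cons, List.mem_singleton, List.not_mem_nil, or_false] at hm
    rcases hm with rfl | rfl <;> simp [ih l hl]

/-- The truth-value pattern of a world on a list of formulae. -/
noncomputable def patt (M : Kripke) (αs : List MLForm) (w : M.W) : List Bool :=
  αs.map fun α => decide (MLsat M {w} α)

lemma sat_zip (M : Kripke) (w : M.W) :
    ∀ (αs : List MLForm) (a : List Bool), a.length = αs.length →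
    ((∀ φ ∈ List.zipWith signed αs a, MLsat M {w} φ) ↔ a = patt M αs w) := by
  intro αs
  induction αs with
  | nil =>
    intro a ha
    cases a with
    | nil => simp [patt]
    | cons b a => simp at ha
  | cons α αs ih =>
    intro a ha
    cases a with
    | nil => simp at ha
    | cons b a =>
      simp only [List.zipWith_cons_cons, List.forall_mem_cons, patt, List.map_cons,
        List.cons.injEq]
      rw [ih a (by simpa using ha)]
      apply and_congr _ Iff.rfl
      rw [sat_signed]
      cases b <;> simp

lemma patt_length (M : Kripke) (αs : List MLForm) (w : M.W) :
    (patt M αs w).length = αs.length := by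
  simp [patt]

lemma patt_mem_tuples (M : Kripke) (αs : List MLForm) (w : M.W) :
    patt M αs w ∈ tuples αs.length := by
  have := mem_tuples_self (patt M αs w)
  rwa [patt_length] at this

lemma sat_Dform (M : Kripke) (T : Set M.W) (f : List Bool → Bool)
    (αs : List MLForm) (β : MLForm) :
    MLsat M T (Dform f αs β) ↔
      ∀ w ∈ T, (MLsat M {w} β ↔ f (patt M αs w) = true) := by
  rw [Dform, mlsat_flat]
  refine forall₂_congr fun w hw => ?_
  rw [sat_bigDisj]
  constructor
  · rintro ⟨φ, hφ, hsat⟩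
    obtain ⟨a, ha, rfl⟩ := List.mem_map.mp hφ
    rw [sat_bigConj] at hsat
    simp only [List.mem_append, List.mem_singleton] at hsat
    have hz : ∀ φ ∈ List.zipWith signed αs a, MLsat M {w} φ :=
      fun φ h => hsat φ (Or.inl h)
    have hb : MLsat M {w} (signed β (f a)) := hsat _ (Or.inr rfl)
    have := (sat_zip M w αs a (length_of_mem_tuples _ a ha)).mp hz
    subst this
    rwa [sat_signed] at hb
  · intro h
    refine ⟨bigConj (List.zipWith signed αs (patt M αs w) ++
      [signed β (f (patt M αs w))]), List.mem_map.mpr ⟨patt M αs w, patt_mem_tuples M αs w, rfl⟩, ?_⟩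
    rw [sat_bigConj]
    simp only [List.mem_append, List.mem_singleton]
    rintro φ (hφ | rfl)
    · exact (sat_zip M w αs (patt M αs w) (patt_length M αs w)).mpr rfl φ hφ
    · rw [sat_signed]; exact h

lemma map_eq_pointwise {A B : Type*} :
    ∀ (l : List A) (f g : A → B), l.map f = l.map g → ∀ a ∈ l, f a = g a := by
  intro l
  induction l with
  | nil => intro f g _ a ha; simp at ha
  | cons x l ih =>
    intro f g h a ha
    simp only [List.map_cons, List.cons.injEq] at h
    rcases List.mem_cons.mp ha with rfl | ha
    · exact h.1
    · exact ih f g h.2 a ha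

end Aux

/-- Representation of an extended dependence atom by the intuitionistic disjunction,
over all witnesses `f`, of the witnessing formulae `D(f)`. -/
theorem edep_representation (M : Kripke) (T : Set M.W)
    (αs : List MLForm) (β : MLForm) :
    edepSat M T αs β ↔ ∃ f : List Bool → Bool, MLsat M T (Dform f αs β) := by
  classical
  constructor
  · intro h
    refine ⟨fun a => decide (∃ w ∈ T, patt M αs w = a ∧ MLsat M {w} β), ?_⟩
    rw [sat_Dform]
    intro w hw
    simp only [decide_eq_true_eq]
    constructor
    · intro hβ; exact ⟨w, hw, rfl, hβ⟩
    · rintro ⟨w', hw', hpe, hβ'⟩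
      refine (h w' hw' w hw ?_).mp hβ'
      intro α hα
      have := map_eq_pointwise αs _ _ hpe α hα
      exact decide_eq_decide.mp this
  · rintro ⟨f, hf⟩ w hw w' hw' hagree
    rw [sat_Dform] at hf
    have hp : patt M αs w = patt M αs w' := by
      refine List.map_congr_left fun α hα => ?_
      exact decide_eq_decide.mpr (hagree α hα)
    rw [hf w hw, hf w' hw', hp]
end

section
/- Locality for quantified propositional dependence logic: for any QPDL formula φ, team X over V ⊇ Fr(φ), and V' with Fr(φ) ⊆ V' ⊆ V, X ⊨ φ iff the restricted team X↾V' = {s↾V' : s ∈ X} satisfies φ. -/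
/-- Quantified propositional dependence logic (NNF with dependence atoms and quantifiers). -/
inductive QPDLForm : Type
  | pos : ℕ → QPDLForm
  | neg : ℕ → QPDLForm
  | dep : List ℕ → ℕ → QPDLForm
  | conj : QPDLForm → QPDLForm → QPDLForm
  | disj : QPDLForm → QPDLForm → QPDLForm
  | ex : ℕ → QPDLForm → QPDLForm
  | all : ℕ → QPDLForm → QPDLForm

/-- Free variables. -/
def Fr : QPDLForm → Set ℕ
  | .pos p => {p}
  | .neg p => {p}
  | .dep ps q => {v | v ∈ ps} ∪ {q}
  | .conj φ ψ => Fr φ ∪ Fr ψ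
  | .disj φ ψ => Fr φ ∪ Fr ψ
  | .ex p φ => Fr φ \ {p}
  | .all p φ => Fr φ \ {p}

/-- Duplication team `X[{0,1}/p]`. -/
def dupl (X : Set (ℕ → Bool)) (p : ℕ) : Set (ℕ → Bool) :=
  {s' | ∃ s ∈ X, ∃ a : Bool, s' = Function.update s p a}

/-- Supplementation team `X[F/p]` for `F : X → {{0},{1},{0,1}}`. -/
def suppl (X : Set (ℕ → Bool)) (F : (ℕ → Bool) → Set Bool) (p : ℕ) : Set (ℕ → Bool) :=
  {s' | ∃ s ∈ X, ∃ a ∈ F s, s' = Function.update s p a}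

/-- Lax team semantics for QPDL. -/
def QPDLsat : Set (ℕ → Bool) → QPDLForm → Prop
  | X, .pos p => ∀ s ∈ X, s p = true
  | X, .neg p => ∀ s ∈ X, s p = false
  | X, .dep ps q => ∀ s ∈ X, ∀ s' ∈ X, ps.map s = ps.map s' → s q = s' q
  | X, .conj φ ψ => QPDLsat X φ ∧ QPDLsat X ψ
  | X, .disj φ ψ => ∃ Y Z, Y ∪ Z = X ∧ QPDLsat Y φ ∧ QPDLsat Z ψ
  | X, .ex p φ => ∃ F : (ℕ → Bool) → Set Bool,
      (∀ s ∈ X, (F s).Nonempty) ∧ QPDLsat (suppl X F p) φ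
  | X, .all p φ => QPDLsat (dupl X p) φ

open Classical in
/-- Restriction of an assignment to a variable set `V'` (defaulting to `false` elsewhere). -/
noncomputable def restr (V' : Set ℕ) (s : ℕ → Bool) : ℕ → Bool :=
  fun v => if v ∈ V' then s v else false


lemma restr_eq_on (V' : Set ℕ) {s t : ℕ → Bool}
    (h : restr V' s = restr V' t) {v : ℕ} (hv : v ∈ V') : s v = t v := by
  have := congrFun h v
  simpa [restr, hv] using this

lemma restr_update (V' : Set ℕ) (p : ℕ) (s : ℕ → Bool) (a : Bool) :
    restr (insert p V') (Function.update s p a) = Function.update (restr V' s) p a := by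
  funext v
  by_cases hv : v = p
  · subst hv; simp [restr, Function.update]
  · by_cases hvV : v ∈ V' <;> simp [restr, Function.update, hv, hvV]

lemma qpdl_mono (φ : QPDLForm) :
    ∀ (V' : Set ℕ) (X Y : Set (ℕ → Bool)), Fr φ ⊆ V' →
      restr V' '' X = restr V' '' Y → QPDLsat X φ → QPDLsat Y φ := by
  induction φ with
  | pos p =>
    intro V' X Y hFr h hX s hs
    have hp : p ∈ V' := hFr rfl
    have : restr V' s ∈ restr V' '' X := h ▸ Set.mem_image_of_mem _ hs
    obtain ⟨t, ht, hts⟩ := this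
    have := restr_eq_on V' hts hp
    rw [← this]; exact hX t ht
  | neg p =>
    intro V' X Y hFr h hX s hs
    have hp : p ∈ V' := hFr rfl
    obtain ⟨t, ht, hts⟩ : restr V' s ∈ restr V' '' X := h ▸ Set.mem_image_of_mem _ hs
    rw [← restr_eq_on V' hts hp]; exact hX t ht
  | dep ps q =>
    intro V' X Y hFr h hX s hs s' hs' hmap
    have hq : q ∈ V' := hFr (Or.inr rfl)
    obtain ⟨t, ht, hts⟩ : restr V' s ∈ restr V' '' X := h ▸ Set.mem_image_of_mem _ hs
    obtain ⟨t', ht', hts'⟩ : restr V' s' ∈ restr V' '' X := h ▸ Set.mem_image_of_mem _ hs'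
    have hmap' : ps.map t = ps.map t' := by
      have e1 : ps.map t = ps.map s := List.map_congr_left fun v hv =>
        restr_eq_on V' hts (hFr (Or.inl hv))
      have e2 : ps.map t' = ps.map s' := List.map_congr_left fun v hv =>
        restr_eq_on V' hts' (hFr (Or.inl hv))
      rw [e1, e2, hmap]
    calc s q = t q := (restr_eq_on V' hts hq).symm
      _ = t' q := hX t ht t' ht' hmap'
      _ = s' q := restr_eq_on V' hts' hq
  | conj φ ψ ihφ ihψ =>
    intro V' X Y hFr h hX
    exact ⟨ihφ V' X Y (fun v hv => hFr (Or.inl hv)) h hX.1,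
           ihψ V' X Y (fun v hv => hFr (Or.inr hv)) h hX.2⟩
  | disj φ ψ ihφ ihψ =>
    intro V' X Y hFr h hX
    obtain ⟨A, B, hAB, hA, hB⟩ := hX
    refine ⟨{s ∈ Y | restr V' s ∈ restr V' '' A}, {s ∈ Y | restr V' s ∈ restr V' '' B}, ?_, ?_, ?_⟩
    · ext s
      constructor
      · rintro (⟨hs, -⟩ | ⟨hs, -⟩) <;> exact hs
      · intro hs
        obtain ⟨t, ht, hts⟩ : restr V' s ∈ restr V' '' X := h ▸ Set.mem_image_of_mem _ hs
        rw [← hAB] at ht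
        rcases ht with ht | ht
        · exact Or.inl ⟨hs, ⟨t, ht, hts⟩⟩
        · exact Or.inr ⟨hs, ⟨t, ht, hts⟩⟩
    · refine ihφ V' A _ (fun v hv => hFr (Or.inl hv)) ?_ hA
      ext r
      constructor
      · rintro ⟨t, ht, rfl⟩
        have : restr V' t ∈ restr V' '' Y := by
          rw [← h]; exact Set.mem_image_of_mem _ (hAB ▸ Set.mem_union_left _ ht)
        obtain ⟨s, hs, hst⟩ := this
        exact ⟨s, ⟨hs, ⟨t, ht, hst.symm⟩⟩, hst⟩
      · rintro ⟨s, ⟨hs, hmem⟩, rfl⟩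
        exact hmem
    · refine ihψ V' B _ (fun v hv => hFr (Or.inr hv)) ?_ hB
      ext r
      constructor
      · rintro ⟨t, ht, rfl⟩
        have : restr V' t ∈ restr V' '' Y := by
          rw [← h]; exact Set.mem_image_of_mem _ (hAB ▸ Set.mem_union_right _ ht)
        obtain ⟨s, hs, hst⟩ := this
        exact ⟨s, ⟨hs, ⟨t, ht, hst.symm⟩⟩, hst⟩
      · rintro ⟨s, ⟨hs, hmem⟩, rfl⟩
        exact hmem
  | ex p φ ih =>
    intro V' X Y hFr h hX
    obtain ⟨F, hFne, hFsat⟩ := hX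
    refine ⟨fun s => {a | ∃ t ∈ X, restr V' t = restr V' s ∧ a ∈ F t}, ?_, ?_⟩
    · intro s hs
      obtain ⟨t, ht, hts⟩ : restr V' s ∈ restr V' '' X := h ▸ Set.mem_image_of_mem _ hs
      obtain ⟨a, ha⟩ := hFne t ht
      exact ⟨a, t, ht, hts, ha⟩
    · refine ih (insert p V') (suppl X F p) _ ?_ ?_ hFsat
      · intro v hv
        by_cases hvp : v = p
        · exact Or.inl hvp
        · exact Or.inr (hFr ⟨hv, hvp⟩)
      · ext r
        constructor
        · rintro ⟨u, ⟨t, ht, a, ha, rfl⟩, rfl⟩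
          have : restr V' t ∈ restr V' '' Y := h ▸ Set.mem_image_of_mem _ ht
          obtain ⟨s, hs, hst⟩ := this
          refine ⟨Function.update s p a, ⟨s, hs, a, ⟨t, ht, hst.symm, ha⟩, rfl⟩, ?_⟩
          rw [restr_update, restr_update, hst]
        · rintro ⟨u, ⟨s, hs, a, ⟨t, ht, hts, ha⟩, rfl⟩, rfl⟩
          refine ⟨Function.update t p a, ⟨t, ht, a, ha, rfl⟩, ?_⟩
          rw [restr_update, restr_update, hts]
  | all p φ ih =>
    intro V' X Y hFr h hX
    refine ih (insert p V') (dupl X p) (dupl Y p) ?_ ?_ hX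
    · intro v hv
      by_cases hvp : v = p
      · exact Or.inl hvp
      · exact Or.inr (hFr ⟨hv, hvp⟩)
    · ext r
      constructor
      · rintro ⟨u, ⟨t, ht, a, rfl⟩, rfl⟩
        obtain ⟨s, hs, hst⟩ : restr V' t ∈ restr V' '' Y := h ▸ Set.mem_image_of_mem _ ht
        refine ⟨Function.update s p a, ⟨s, hs, a, rfl⟩, ?_⟩
        rw [restr_update, restr_update, hst]
      · rintro ⟨u, ⟨s, hs, a, rfl⟩, rfl⟩
        obtain ⟨t, ht, hts⟩ : restr V' s ∈ restr V' '' X := h.symm ▸ Set.mem_image_of_mem _ hs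
        refine ⟨Function.update t p a, ⟨t, ht, a, rfl⟩, ?_⟩
        rw [restr_update, restr_update, hts]

/-- Locality for quantified propositional dependence logic. -/
theorem qpdl_locality (φ : QPDLForm) (X : Set (ℕ → Bool)) (V' : Set ℕ)
    (hV' : Fr φ ⊆ V') :
    QPDLsat X φ ↔ QPDLsat (restr V' '' X) φ := by
  have idem : ∀ s, restr V' (restr V' s) = restr V' s := by
    intro s; funext v; by_cases hv : v ∈ V' <;> simp [restr, hv]
  have key : restr V' '' X = restr V' '' (restr V' '' X) := by
    rw [Set.image_image]
    exact Set.image_congr (fun s _ => (idem s).symm)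
  exact ⟨qpdl_mono φ V' X _ hV' key, qpdl_mono φ V' _ X hV' key.symm⟩
end

section
/- Reduction of Π₂-ADQBF to PDL entailment (soundness, right-to-left): let θ be a quantifier-free propositional formula over variables p₁,…,pₙ,q₁,…,q_{m+m'}, with constraint tuples c⃗ᵢ ⊆ {p₁,…,pₙ}. If for all functions f₁,…,f_m (fᵢ : {0,1}^{|c⃗ᵢ|} → {0,1}) there exist functions f_{m+1},…,f_{m+m'} such that for every assignment of p₁,…,pₙ, the assignment extended by qᵢ := fᵢ(c⃗ᵢ) for all i satisfies θ, then the set Σ = {=(c⃗ᵢ,qᵢ) : i=1,…,m} entails (in team semantics) ψ := θ ∨ =(c⃗_{m+1},q_{m+1}) ∨ … ∨ =(c⃗_{m+m'},q_{m+m'}). -/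
/-- Quantifier-free propositional formulae. -/
inductive PLForm : Type
  | pos : ℕ → PLForm
  | neg : ℕ → PLForm
  | conj : PLForm → PLForm → PLForm
  | disj : PLForm → PLForm → PLForm

/-- Classical (Tarskian) single-assignment semantics. -/
def PLsatC (s : ℕ → Bool) : PLForm → Prop
  | .pos p => s p = true
  | .neg p => s p = false
  | .conj φ ψ => PLsatC s φ ∧ PLsatC s ψ
  | .disj φ ψ => PLsatC s φ ∨ PLsatC s ψ

/-- Propositional dependence logic. -/
inductive PDLForm : Type
  | pos : ℕ → PDLForm
  | neg : ℕ → PDLForm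
  | dep : List ℕ → ℕ → PDLForm
  | conj : PDLForm → PDLForm → PDLForm
  | disj : PDLForm → PDLForm → PDLForm

/-- Embedding of quantifier-free propositional formulae into PDL. -/
def toPDL : PLForm → PDLForm
  | .pos p => .pos p
  | .neg p => .neg p
  | .conj φ ψ => .conj (toPDL φ) (toPDL ψ)
  | .disj φ ψ => .disj (toPDL φ) (toPDL ψ)

/-- Team semantics for propositional dependence logic. -/
def PDLsat : Set (ℕ → Bool) → PDLForm → Prop
  | X, .pos p => ∀ s ∈ X, s p = true
  | X, .neg p => ∀ s ∈ X, s p = false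
  | X, .dep ps q => ∀ s ∈ X, ∀ s' ∈ X, ps.map s = ps.map s' → s q = s' q
  | X, .conj φ ψ => PDLsat X φ ∧ PDLsat X ψ
  | X, .disj φ ψ => ∃ Y Z, Y ∪ Z = X ∧ PDLsat Y φ ∧ PDLsat Z ψ

/-!
On a team `X` satisfying `=(c⃗ᵢ, qᵢ)` the value of `qᵢ` is a function `fᵢ` of `c⃗ᵢ`; let `g` be
the existential Skolem functions answering these `f`. Split `X` into the assignments on which
every `rⱼ` equals `gⱼ(d⃗ⱼ)`, which satisfy `θ` one by one and hence, by flatness, as a team, and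
for each `j` the assignments on which `rⱼ ≠ gⱼ(d⃗ⱼ)`: there `rⱼ = ¬gⱼ(d⃗ⱼ)` is again a function
of `d⃗ⱼ`, so `=(d⃗ⱼ, rⱼ)` holds.
-/
theorem PDLsat_toPDL_of_forall_PLsatC : ∀ (θ : PLForm) (X : Set (ℕ → Bool)),
    (∀ s ∈ X, PLsatC s θ) → PDLsat X (toPDL θ)
  | .pos _, _, h => h
  | .neg _, _, h => h
  | .conj φ ψ, X, h =>
    ⟨PDLsat_toPDL_of_forall_PLsatC φ X fun s hs => (h s hs).1,
      PDLsat_toPDL_of_forall_PLsatC ψ X fun s hs => (h s hs).2⟩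
  | .disj φ ψ, X, h =>
    ⟨{s ∈ X | PLsatC s φ}, {s ∈ X | PLsatC s ψ},
      Set.ext fun s => ⟨by rintro (⟨hs, -⟩ | ⟨hs, -⟩) <;> exact hs,
        fun hs => (h s hs).imp (⟨hs, ·⟩) (⟨hs, ·⟩)⟩,
      PDLsat_toPDL_of_forall_PLsatC φ _ fun _ hs => hs.2,
      PDLsat_toPDL_of_forall_PLsatC ψ _ fun _ hs => hs.2⟩

theorem PDLsat_dep_iff {X : Set (ℕ → Bool)} {ps : List ℕ} {q : ℕ} :
    PDLsat X (.dep ps q) ↔ ∃ h : List Bool → Bool, ∀ s ∈ X, s q = h (ps.map s) := by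
  constructor
  · intro hdep
    have hfac : Function.FactorsThrough (fun s : X => s.1 q) (fun s : X => ps.map s.1) :=
      fun s s' hss' => hdep s s.2 s' s'.2 hss'
    exact ⟨Function.extend (fun s : X => ps.map s.1) (fun s => s.1 q) fun _ => false,
      fun s hs => (hfac.extend_apply _ ⟨s, hs⟩).symm⟩
  · rintro ⟨h, hh⟩ s hs s' hs' hss'
    rw [hh s hs, hh s' hs', hss']

theorem PDLsat_foldl_disj_ofFn {n : ℕ} (φ : PDLForm) (F : Fin n → PDLForm)
    (Y : Set (ℕ → Bool)) (Z : Fin n → Set (ℕ → Bool)) (hY : PDLsat Y φ)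
    (hZ : ∀ i, PDLsat (Z i) (F i)) :
    PDLsat (Y ∪ ⋃ i, Z i) ((List.ofFn F).foldl PDLForm.disj φ) := by
  induction n generalizing φ Y with
  | zero => simpa using hY
  | succ n ih =>
    have hunion : Y ∪ ⋃ i, Z i = (Y ∪ Z 0) ∪ ⋃ i : Fin n, Z i.succ := by
      ext s; simp [Fin.exists_fin_succ, or_assoc]
    rw [List.ofFn_succ, List.foldl_cons, hunion]
    exact ih _ _ _ _ ⟨Y, Z 0, rfl, hY, hZ 0⟩ fun i => hZ i.succ

theorem pi2adqbf_to_pdl_entailment_general (m m' : ℕ) (θ : PLForm)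
    (cs : Fin m → List ℕ) (qs : Fin m → ℕ)
    (ds : Fin m' → List ℕ) (rs : Fin m' → ℕ)
    (htrue : ∀ f : Fin m → (List Bool → Bool), ∃ g : Fin m' → (List Bool → Bool),
      ∀ s : ℕ → Bool,
        (∀ i, s (qs i) = f i ((cs i).map s)) →
        (∀ j, s (rs j) = g j ((ds j).map s)) →
        PLsatC s θ) :
    ∀ X : Set (ℕ → Bool),
      (∀ i : Fin m, PDLsat X (.dep (cs i) (qs i))) →
      PDLsat X ((List.ofFn fun j : Fin m' => PDLForm.dep (ds j) (rs j)).foldl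
        PDLForm.disj (toPDL θ)) := by
  intro X hdep
  choose f hf using fun i => PDLsat_dep_iff.1 (hdep i)
  obtain ⟨g, hg⟩ := htrue f
  let agrees (j : Fin m') (s : ℕ → Bool) : Prop := s (rs j) = g j ((ds j).map s)
  have hsplit : X = {s ∈ X | ∀ j, agrees j s} ∪ ⋃ j, {s ∈ X | ¬ agrees j s} := by
    ext s
    by_cases hs : ∀ j, agrees j s <;> simp_all
  rw [hsplit]
  refine PDLsat_foldl_disj_ofFn _ _ _ _ ?_ fun j => ?_
  · exact PDLsat_toPDL_of_forall_PLsatC θ _ fun s ⟨hs, hgs⟩ => hg s (fun i => hf i s hs) hgs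
  · exact PDLsat_dep_iff.2 ⟨fun v => !g j v, fun s ⟨_, hs⟩ => by
      simpa [agrees, Bool.eq_not_iff] using hs⟩

/-- Soundness (right-to-left) of the reduction of `Π₂-ADQBF` to PDL entailment:
if for all Skolem functions `f` for the universally quantified function variables there
are Skolem functions `g` for the existentially quantified ones such that every assignment
consistent with `f` and `g` satisfies `θ`, then
`{=(c⃗ᵢ,qᵢ) : i < m} ⊨ θ ∨ =(d⃗₁,r₁) ∨ … ∨ =(d⃗_{m'},r_{m'})`. -/
theorem pi2adqbf_to_pdl_entailment (m m' : ℕ) (θ : PLForm)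
    (cs : Fin m → List ℕ) (qs : Fin m → ℕ)
    (ds : Fin m' → List ℕ) (rs : Fin m' → ℕ)
    (hinj : Function.Injective (Sum.elim qs rs : Fin m ⊕ Fin m' → ℕ))
    (hfresh : ∀ k : Fin m ⊕ Fin m',
      (∀ i, Sum.elim qs rs k ∉ cs i) ∧ (∀ j, Sum.elim qs rs k ∉ ds j))
    (htrue : ∀ f : Fin m → (List Bool → Bool), ∃ g : Fin m' → (List Bool → Bool),
      ∀ s : ℕ → Bool,
        (∀ i, s (qs i) = f i ((cs i).map s)) →
        (∀ j, s (rs j) = g j ((ds j).map s)) →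
        PLsatC s θ) :
    ∀ X : Set (ℕ → Bool),
      (∀ i : Fin m, PDLsat X (.dep (cs i) (qs i))) →
      PDLsat X ((List.ofFn fun j : Fin m' => PDLForm.dep (ds j) (rs j)).foldl
        PDLForm.disj (toPDL θ)) :=
  pi2adqbf_to_pdl_entailment_general m m' θ cs qs ds rs htrue
end

section
/- Maximal satisfying subteam for inclusion atoms: for any team X and inclusion atom p⃗ ⊆ q⃗, the greatest fixed point Y of the operator Y ↦ {s ∈ Y : s(p⃗) ∈ Y(q⃗)} starting from X is the unique maximal subteam of X satisfying p⃗ ⊆ q⃗; i.e., Y ⊨ p⃗ ⊆ q⃗ and every Z ⊆ X with Z ⊨ p⃗ ⊆ q⃗ satisfies Z ⊆ Y. -/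
/-- Team satisfaction of the inclusion atom `p⃗ ⊆ q⃗`. -/
def incSat (ps qs : List ℕ) (X : Set (ℕ → Bool)) : Prop :=
  ∀ s ∈ X, ∃ s' ∈ X, ps.map s = qs.map s'

/-- The subteam-refining operator for the inclusion atom `p⃗ ⊆ q⃗`. -/
def incStep (ps qs : List ℕ) (Y : Set (ℕ → Bool)) : Set (ℕ → Bool) :=
  {s ∈ Y | ∃ s' ∈ Y, ps.map s = qs.map s'}

lemma incStep_subset (ps qs : List ℕ) (Y : Set (ℕ → Bool)) :
    incStep ps qs Y ⊆ Y := fun _ hs => hs.1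

lemma incStep_mono (ps qs : List ℕ) {A B : Set (ℕ → Bool)} (h : A ⊆ B) :
    incStep ps qs A ⊆ incStep ps qs B := by
  rintro s ⟨hs, s', hs', he⟩
  exact ⟨h hs, s', h hs', he⟩

lemma incStep_iter_mono (ps qs : List ℕ) {A B : Set (ℕ → Bool)} (h : A ⊆ B) (n : ℕ) :
    (incStep ps qs)^[n] A ⊆ (incStep ps qs)^[n] B := by
  induction n with
  | zero => exact h
  | succ n ih =>
    rw [Function.iterate_succ_apply', Function.iterate_succ_apply']
    exact incStep_mono ps qs ih

lemma incStep_iter_antitone (ps qs : List ℕ) (X : Set (ℕ → Bool)) {m k : ℕ} (h : m ≤ k) :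
    (incStep ps qs)^[k] X ⊆ (incStep ps qs)^[m] X := by
  induction k with
  | zero => simp_all
  | succ k ih =>
    rcases Nat.lt_or_ge m (k+1) with hl | hg
    · rw [Function.iterate_succ_apply']
      exact (incStep_subset ps qs _).trans (ih (Nat.lt_succ_iff.mp hl))
    · have : m = k + 1 := le_antisymm h hg
      subst this; exact subset_rfl

/-- Maximal satisfying subteam for inclusion atoms: the greatest fixed point of the
refining operator starting from a finite team `X` satisfies `p⃗ ⊆ q⃗`, is a fixed point,
and contains every subteam of `X` satisfying `p⃗ ⊆ q⃗`. -/
theorem inc_max_subteam (ps qs : List ℕ) (X : Set (ℕ → Bool)) (hX : X.Finite) :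
    incSat ps qs (⋂ n : ℕ, (incStep ps qs)^[n] X) ∧
    incStep ps qs (⋂ n : ℕ, (incStep ps qs)^[n] X) = ⋂ n : ℕ, (incStep ps qs)^[n] X ∧
    (∀ Z ⊆ X, incSat ps qs Z → Z ⊆ ⋂ n : ℕ, (incStep ps qs)^[n] X) := by
  set f := incStep ps qs with hf
  have hsub : ∀ n, f^[n] X ⊆ X := fun n => incStep_iter_antitone ps qs X (Nat.zero_le n)
  have hfin : ∀ n, (f^[n] X).Finite := fun n => hX.subset (hsub n)
  -- find stabilization point: minimal ncard
  obtain ⟨n, hn⟩ : ∃ n, (f^[n] X).ncard = sInf (Set.range fun n => (f^[n] X).ncard) :=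
    Nat.sInf_mem (Set.range_nonempty _)
  have hmin : ∀ m, (f^[n] X).ncard ≤ (f^[m] X).ncard := fun m => by
    rw [hn]; exact Nat.sInf_le ⟨m, rfl⟩
  have hstab : f^[n+1] X = f^[n] X := by
    apply Set.eq_of_subset_of_ncard_le
    · rw [Function.iterate_succ_apply']
      exact incStep_subset ps qs _
    · exact hmin (n+1)
    · exact hfin n
  have hIeq : (⋂ m : ℕ, f^[m] X) = f^[n] X := by
    apply subset_antisymm
    · exact Set.iInter_subset _ n
    · apply Set.subset_iInter
      intro m
      rcases le_or_gt m n with hm | hm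
      · exact incStep_iter_antitone ps qs X hm
      · have : ∀ k, f^[n + k] X = f^[n] X := by
          intro k
          induction k with
          | zero => rfl
          | succ k ih =>
            have : f^[n + k + 1] X = f (f^[n+k] X) := Function.iterate_succ_apply' f _ X
            rw [show n + (k+1) = n + k + 1 from rfl, this, ih,
              ← Function.iterate_succ_apply' f n X, hstab]
        rw [show m = n + (m - n) from (Nat.add_sub_cancel' hm.le).symm, this]
  have hfix : f (⋂ m : ℕ, f^[m] X) = ⋂ m : ℕ, f^[m] X := by
    rw [hIeq, ← Function.iterate_succ_apply' f n X, hstab]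
  refine ⟨?_, hfix, ?_⟩
  · intro s hs
    rw [← hfix] at hs
    obtain ⟨_, s', hs', he⟩ := hs
    exact ⟨s', hs', he⟩
  · intro Z hZ hsat
    have hZfix : f Z = Z := by
      apply subset_antisymm (incStep_subset ps qs Z)
      intro s hs
      obtain ⟨s', hs', he⟩ := hsat s hs
      exact ⟨hs, s', hs', he⟩
    have hZiter : ∀ m, f^[m] Z = Z := by
      intro m
      induction m with
      | zero => rfl
      | succ m ih => rw [Function.iterate_succ_apply', ih, hZfix]
    apply Set.subset_iInter
    intro m
    calc Z = f^[m] Z := (hZiter m).symm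
    _ ⊆ f^[m] X := incStep_iter_mono ps qs hZ m
end

section
/- Soundness of the modal tree encoding of universal propositional quantification: if a nonempty team T of a Kripke model M satisfies tree(V,p⃗,n) (the formula forcing the complete binary assignment tree over p₁,…,pₙ while storing the values of variables in V), then for every quantifier-free propositional formula ψ over V ∪ {p₁,…,pₙ}, M,T ⊨ □ⁿψ holds iff the propositional team {assignments over V realized in T} extended by all 2ⁿ valuations of p₁,…,pₙ satisfies ψ. -/
/-- `□ⁿφ`. -/
def boxN : ℕ → MLForm → MLForm
  | 0, φ => φ
  | n + 1, φ => .box (boxN n φ)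

/-- `store(q,n) := (q ∧ □ⁿq) ∨ (¬q ∧ □ⁿ¬q)`. -/
def store (q n : ℕ) : MLForm :=
  .disj (.conj (.pos q) (boxN n (.pos q))) (.conj (.neg q) (boxN n (.neg q)))

/-- `branch(p,n) := ◇p ∧ ◇¬p ∧ □ store(p,n)`. -/
def branch (p n : ℕ) : MLForm :=
  .conj (.dia (.pos p)) (.conj (.dia (.neg p)) (.box (store p n)))

/-- `tree(V,p⃗,n)` forces the complete binary assignment tree over `p₁,…,pₙ` while
storing the values of the variables in `V`. -/
def tree (V : List ℕ) (n : ℕ) (p : Fin n → ℕ) : MLForm :=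
  bigConj ((V.map fun q => store q n) ++
    List.ofFn fun i : Fin n => boxN i (branch (p i) (n - (i + 1))))

/-- Variables of a propositional formula. -/
def varsOf : PLForm → List ℕ
  | .pos p => [p]
  | .neg p => [p]
  | .conj φ ψ => varsOf φ ++ varsOf ψ
  | .disj φ ψ => varsOf φ ++ varsOf ψ

/-- Embedding of propositional formulae into modal logic. -/
def toML : PLForm → MLForm
  | .pos p => .pos p
  | .neg p => .neg p
  | .conj φ ψ => .conj (toML φ) (toML ψ)
  | .disj φ ψ => .disj (toML φ) (toML ψ)

open Classical in
/-- The propositional assignment realized at a world. -/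
noncomputable def asg (M : Kripke) (w : M.W) : ℕ → Bool :=
  fun v => if w ∈ M.π v then true else false

/-!
`□ⁿ` evaluates a formula on the worlds at depth `n` below the team, and propositional
formulas are flat, so `□ⁿψ` says that `ψ` holds at every such world. The `store(q,n)`
conjuncts make every depth-`n` descendant of `w ∈ T` agree with `w` on `V`. Conversely,
the `branch` conjunct at depth `i` lets one step to a successor with any prescribed value
of `pᵢ₊₁`, and the `store` inside it keeps that value fixed down to depth `n`. Hence the
assignments realized at depth `n` are exactly those of `T` with `p⃗` varied freely.
-/

section
variable {M : Kripke}

lemma img_mono_s18 : Monotone (img M) := by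
  rintro S T hST w ⟨w', hw', hR⟩
  exact ⟨w', hST hw', hR⟩

lemma MLsat_boxN (n : ℕ) (T : Set M.W) (φ : MLForm) :
    MLsat M T (boxN n φ) ↔ MLsat M ((img M)^[n] T) φ := by
  induction n generalizing T with
  | zero => rfl
  | succ n ih => exact ih (img M T)

lemma iterate_img_singleton_subset_of_rel {v v' : M.W} (h : M.R v v') (m : ℕ) :
    (img M)^[m] {v'} ⊆ (img M)^[m + 1] {v} := by
  rw [Function.iterate_succ_apply]
  exact img_mono_s18.iterate m (Set.singleton_subset_iff.2 ⟨v, rfl, h⟩)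

lemma mem_iterate_img_iff {n : ℕ} {T : Set M.W} {u : M.W} :
    u ∈ (img M)^[n] T ↔ ∃ w ∈ T, u ∈ (img M)^[n] {w} := by
  induction n generalizing T with
  | zero => simp
  | succ n ih =>
    rw [Function.iterate_succ_apply, ih]
    constructor
    · rintro ⟨v, ⟨w, hw, hR⟩, hu⟩
      exact ⟨w, hw, iterate_img_singleton_subset_of_rel hR n hu⟩
    · rintro ⟨w, hw, hu⟩
      rw [Function.iterate_succ_apply, ih] at hu
      obtain ⟨v, hv, hu⟩ := hu
      exact ⟨v, img_mono_s18 (Set.singleton_subset_iff.2 hw) hv, hu⟩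

lemma asg_eq_true_iff {w : M.W} {q : ℕ} : asg M w q = true ↔ w ∈ M.π q := by
  simp [asg]

lemma asg_eq_false_iff {w : M.W} {q : ℕ} : asg M w q = false ↔ w ∉ M.π q := by
  simp [asg]

lemma MLsat_pos_iff {T : Set M.W} {q : ℕ} :
    MLsat M T (.pos q) ↔ ∀ w ∈ T, asg M w q = true := by
  simp only [MLsat, asg_eq_true_iff]
  rfl

lemma MLsat_neg_iff {T : Set M.W} {q : ℕ} :
    MLsat M T (.neg q) ↔ ∀ w ∈ T, asg M w q = false := by
  simp only [MLsat, asg_eq_false_iff, Set.eq_empty_iff_forall_notMem, Set.mem_inter_iff,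
    not_and]

theorem MLsat_toML_iff (φ : PLForm) {T : Set M.W} :
    MLsat M T (toML φ) ↔ ∀ w ∈ T, PLsatC (asg M w) φ := by
  induction φ generalizing T with
  | pos q => exact MLsat_pos_iff
  | neg q => exact MLsat_neg_iff
  | conj φ ψ ihφ ihψ =>
    simp only [toML, MLsat, PLsatC, ihφ, ihψ, imp_and, forall_and]
  | disj φ ψ ihφ ihψ =>
    simp only [toML, MLsat, PLsatC, ihφ, ihψ]
    constructor
    · rintro ⟨T₁, T₂, rfl, h₁, h₂⟩ w (hw | hw)
      exacts [.inl (h₁ w hw), .inr (h₂ w hw)]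
    · intro h
      refine ⟨{w ∈ T | PLsatC (asg M w) φ}, {w ∈ T | PLsatC (asg M w) ψ}, ?_,
        fun w hw => hw.2, fun w hw => hw.2⟩
      ext w
      simp only [Set.mem_union, Set.mem_sep_iff, ← and_or_left, and_iff_left_iff_imp]
      exact h w

lemma PLsatC_congr {s t : ℕ → Bool} (φ : PLForm) (h : ∀ v ∈ varsOf φ, s v = t v) :
    PLsatC s φ ↔ PLsatC t φ := by
  induction φ with
  | pos q | neg q => simp [PLsatC, h q (by simp [varsOf])]
  | conj φ ψ ihφ ihψ | disj φ ψ ihφ ihψ =>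
    simp only [varsOf, List.mem_append] at h
    simp only [PLsatC, ihφ fun v hv => h v (.inl hv), ihψ fun v hv => h v (.inr hv)]

lemma MLsat_of_mem_bigConj {T : Set M.W} {L : List MLForm} (h : MLsat M T (bigConj L))
    {φ : MLForm} (hφ : φ ∈ L) : MLsat M T φ := by
  induction L with
  | nil => simp at hφ
  | cons ψ L ih =>
    obtain rfl | hφ := List.mem_cons.mp hφ
    exacts [h.1, ih h.2 hφ]

section tree
variable {T : Set M.W} {V : List ℕ} {n : ℕ} {p : Fin n → ℕ}

lemma MLsat_store_of_tree (h : MLsat M T (tree V n p)) {q : ℕ} (hq : q ∈ V) :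
    MLsat M T (store q n) :=
  MLsat_of_mem_bigConj h (List.mem_append_left _ (List.mem_map_of_mem hq))

lemma MLsat_branch_of_tree (h : MLsat M T (tree V n p)) (i : Fin n) :
    MLsat M ((img M)^[i] T) (branch (p i) (n - (i + 1))) :=
  (MLsat_boxN _ _ _).1 <|
    MLsat_of_mem_bigConj h (List.mem_append_right _ (List.mem_ofFn.2 ⟨i, rfl⟩))

end tree

lemma asg_eq_of_store {T : Set M.W} {q m : ℕ} (h : MLsat M T (store q m)) {w u : M.W}
    (hw : w ∈ T) (hu : u ∈ (img M)^[m] {w}) : asg M u q = asg M w q := by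
  obtain ⟨T₁, T₂, rfl, ⟨h₁, h₁'⟩, ⟨h₂, h₂'⟩⟩ := h
  rw [MLsat_boxN] at h₁' h₂'
  rcases hw with hw | hw
  · rw [MLsat_pos_iff.1 h₁ w hw, MLsat_pos_iff.1 h₁' u (mem_iterate_img_iff.2 ⟨w, hw, hu⟩)]
  · rw [MLsat_neg_iff.1 h₂ w hw, MLsat_neg_iff.1 h₂' u (mem_iterate_img_iff.2 ⟨w, hw, hu⟩)]

lemma exists_rel_asg_eq_of_branch {T : Set M.W} {q m : ℕ} (h : MLsat M T (branch q m))
    {v : M.W} (hv : v ∈ T) (b : Bool) : ∃ v', M.R v v' ∧ asg M v' q = b := by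
  obtain ⟨⟨_, -, hT₁, h₁⟩, ⟨_, -, hT₂, h₂⟩, -⟩ := h
  cases b
  · obtain ⟨v', hv', hR⟩ := hT₂ v hv
    exact ⟨v', hR, MLsat_neg_iff.1 h₂ v' hv'⟩
  · obtain ⟨v', hv', hR⟩ := hT₁ v hv
    exact ⟨v', hR, MLsat_pos_iff.1 h₁ v' hv'⟩

lemma exists_asg_eq_of_branch {T : Set M.W} {n : ℕ} {p : Fin n → ℕ}
    (hbranch : ∀ i : Fin n, MLsat M ((img M)^[i] T) (branch (p i) (n - (i + 1))))
    {w : M.W} (hw : w ∈ T) (b : Fin n → Bool) :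
    ∃ u ∈ (img M)^[n] {w}, ∀ i, asg M u (p i) = b i := by
  -- At depth `k` the values of `p₁,…,p_k` are already fixed on the whole subtree below.
  suffices ∀ k ≤ n, ∃ v ∈ (img M)^[k] {w},
      ∀ i : Fin n, i < k → ∀ u ∈ (img M)^[n - k] {v}, asg M u (p i) = b i by
    obtain ⟨u, hu, hb⟩ := this n le_rfl
    exact ⟨u, hu, fun i => hb i i.isLt u (by rw [Nat.sub_self]; rfl)⟩
  intro k hk
  induction k with
  | zero => exact ⟨w, rfl, fun i hi => absurd hi (Nat.not_lt_zero _)⟩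
  | succ k ih =>
    obtain ⟨v, hv, hb⟩ := ih (by omega)
    have hvT : v ∈ (img M)^[k] T := mem_iterate_img_iff.2 ⟨w, hw, hv⟩
    let i₀ : Fin n := ⟨k, hk⟩
    obtain ⟨v', hR, hv'⟩ := exists_rel_asg_eq_of_branch (hbranch i₀) hvT (b i₀)
    refine ⟨v', ?_, fun i hi u hu => ?_⟩
    · rw [Function.iterate_succ_apply']
      exact ⟨v, hv, hR⟩
    obtain hi | rfl : (i : ℕ) < k ∨ i = i₀ := by
      rcases Nat.lt_succ_iff_lt_or_eq.1 hi with hi | hi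
      exacts [.inl hi, .inr (Fin.ext hi)]
    · have hu' := iterate_img_singleton_subset_of_rel hR (n - (k + 1)) hu
      rw [show n - (k + 1) + 1 = n - k by omega] at hu'
      exact hb i hi u hu'
    · rw [← hv']
      exact asg_eq_of_store (hbranch i₀).2.2 ⟨v, hvT, hR⟩ hu

end

theorem tree_encoding_sound_general (M : Kripke) (T : Set M.W)
    (n : ℕ) (p : Fin n → ℕ) (V : List ℕ)
    (htree : MLsat M T (tree V n p))
    (ψ : PLForm) (hvars : ∀ v ∈ varsOf ψ, v ∈ V ∨ ∃ i, v = p i) :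
    MLsat M T (boxN n (toML ψ)) ↔
      ∀ s : ℕ → Bool, (∃ w ∈ T, ∀ v ∈ V, s v = asg M w v) → PLsatC s ψ := by
  have hstore {w u : M.W} (hw : w ∈ T) (hu : u ∈ (img M)^[n] {w}) (v : ℕ) (hv : v ∈ V) :
      asg M u v = asg M w v :=
    asg_eq_of_store (MLsat_store_of_tree htree hv) hw hu
  rw [MLsat_boxN, MLsat_toML_iff]
  constructor
  · rintro h s ⟨w, hw, hs⟩
    obtain ⟨u, hu, hup⟩ := exists_asg_eq_of_branch (MLsat_branch_of_tree htree) hw (s ∘ p)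
    refine (PLsatC_congr ψ fun v hv => ?_).1 (h u (mem_iterate_img_iff.2 ⟨w, hw, hu⟩))
    obtain hvV | ⟨i, rfl⟩ := hvars v hv
    · rw [hs v hvV, hstore hw hu v hvV]
    · exact hup i
  · intro h u hu
    obtain ⟨w, hw, hu⟩ := mem_iterate_img_iff.1 hu
    exact h _ ⟨w, hw, fun v hv => hstore hw hu v hv⟩

/-- Soundness of the modal tree encoding of universal propositional quantification:
if a nonempty team satisfies `tree(V,p⃗,n)`, then for every quantifier-free propositional
`ψ` over `V ∪ {p₁,…,pₙ}`, `M,T ⊨ □ⁿψ` iff the propositional team of assignments realized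
in `T`, duplicated with all `2ⁿ` valuations of `p₁,…,pₙ`, satisfies `ψ`. -/
theorem tree_encoding_sound (M : Kripke) (T : Set M.W) (hT : T.Nonempty)
    (n : ℕ) (p : Fin n → ℕ) (V : List ℕ)
    (hpV : ∀ i, p i ∉ V) (hpInj : Function.Injective p)
    (htree : MLsat M T (tree V n p))
    (ψ : PLForm) (hvars : ∀ v ∈ varsOf ψ, v ∈ V ∨ ∃ i, v = p i) :
    MLsat M T (boxN n (toML ψ)) ↔
      ∀ s : ℕ → Bool, (∃ w ∈ T, ∀ v ∈ V, s v = asg M w v) → PLsatC s ψ :=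
  tree_encoding_sound_general M T n p V htree ψ hvars
end
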